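/- arXiv:2304.04504 — 2 statements merged into one kernel-verified Lean document; each statement's English description precedes it below -/
import Mathlib

section
/- Let H be a 2-connected bipartite subgraph of a 2-connected non-bipartite graph G. Then there exists an odd H-ear in G, i.e. a path P in G with both endvertices in V(H), internally vertex-disjoint and edge-disjoint from H, such that H ∪ P is not bipartite. -/
open SimpleGraph

/-! ### Minors and odd-minors -/

/-- `η` is an `H`-expansion in `G`: the branch sets are pairwise disjoint trees in `G`,
and every edge of `H` is realised by an edge of `G` between the corresponding branch sets. -/
def IsExpansion {V W : Type} (G : SimpleGraph V) (H : SimpleGraph W)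
    (η : W → G.Subgraph) : Prop :=
  (∀ w, ((η w).coe).IsTree) ∧
  (Pairwise fun w₁ w₂ => Disjoint (η w₁).verts (η w₂).verts) ∧
  (∀ ⦃w₁ w₂⦄, H.Adj w₁ w₂ → ∃ a ∈ (η w₁).verts, ∃ b ∈ (η w₂).verts, G.Adj a b)

/-- `H` is a minor of `G`. -/
def IsMinor {W V : Type} (H : SimpleGraph W) (G : SimpleGraph V) : Prop :=
  ∃ η : W → G.Subgraph, IsExpansion G H η

/-- `η` together with the witnessing 2-colouring `c` is an odd `H`-expansion in `G`:
`c` is proper on every branch tree, and every edge of `H` is realised by a monochromatic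
edge of `G` between the corresponding branch sets. -/
def IsOddExpansion {V W : Type} (G : SimpleGraph V) (H : SimpleGraph W)
    (η : W → G.Subgraph) (c : V → Bool) : Prop :=
  (∀ w, ((η w).coe).IsTree) ∧
  (Pairwise fun w₁ w₂ => Disjoint (η w₁).verts (η w₂).verts) ∧
  (∀ w, ∀ ⦃a b : V⦄, (η w).Adj a b → c a ≠ c b) ∧
  (∀ ⦃w₁ w₂⦄, H.Adj w₁ w₂ →
      ∃ a ∈ (η w₁).verts, ∃ b ∈ (η w₂).verts, G.Adj a b ∧ c a = c b)

/-- `H` is an odd-minor of `G`. -/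
def IsOddMinor {W V : Type} (H : SimpleGraph W) (G : SimpleGraph V) : Prop :=
  ∃ (η : W → G.Subgraph) (c : V → Bool), IsOddExpansion G H η c

/-! ### Tree-decompositions and (blind) treewidth -/

/-- A tree-decomposition of a graph `G`. -/
structure TreeDecomposition {V : Type} (G : SimpleGraph V) where
  τ : Type
  tree : SimpleGraph τ
  tree_isTree : tree.IsTree
  bag : τ → Set V
  bag_cover : ∀ v : V, ∃ t, v ∈ bag t
  bag_edge : ∀ ⦃u v : V⦄, G.Adj u v → ∃ t, u ∈ bag t ∧ v ∈ bag t
  bag_conn : ∀ v : V, (tree.induce {t | v ∈ bag t}).Connected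

/-- The width of a tree-decomposition: maximum bag size minus one. -/
noncomputable def TreeDecomposition.width {V : Type} {G : SimpleGraph V}
    (D : TreeDecomposition G) : ℕ :=
  sSup {n | ∃ t, n = (D.bag t).ncard} - 1

/-- The treewidth of a graph. -/
noncomputable def treewidth {V : Type} (G : SimpleGraph V) : ℕ :=
  sInf {n | ∃ D : TreeDecomposition G, D.width = n}

/-- The `A`-blind-width of a tree-decomposition: the largest size of a bag `β t` with
`(G, β t) ∉ A`, and `0` if every bag satisfies `A`. -/
noncomputable def TreeDecomposition.blindWidth {V : Type} {G : SimpleGraph V}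
    (D : TreeDecomposition G) (A : Set V → Prop) : ℕ :=
  sSup {n | ∃ t, ¬ A (D.bag t) ∧ n = (D.bag t).ncard}

/-- The `A`-blind-treewidth of a graph. -/
noncomputable def blindTreewidth {V : Type} (G : SimpleGraph V) (A : Set V → Prop) : ℕ :=
  sInf {n | ∃ D : TreeDecomposition G, D.blindWidth A = n}

/-! ### The annotated classes `B` and `P` -/

/-- `X` is globally bipartite in `G`: every odd cycle of `G` contains at most one
vertex of `X`.  This is the annotated class `B`. -/
def GloballyBipartite {V : Type} (G : SimpleGraph V) (X : Set V) : Prop :=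
  ∀ ⦃v : V⦄ (C : G.Walk v v), C.IsCycle → Odd C.length →
    Set.Subsingleton (X ∩ {x | x ∈ C.support})

/-- The torso of `X` in `G`: two vertices of `X` are adjacent iff they are joined by a
path of `G` all of whose internal vertices avoid `X` (equivalently, the torso is obtained
from `G[X]` by making the neighbourhood of each component of `G - X` a clique). -/
def Torso {V : Type} (G : SimpleGraph V) (X : Set V) : SimpleGraph X :=
  SimpleGraph.fromRel fun a b =>
    ∃ p : G.Walk a.1 b.1, p.IsPath ∧ ∀ x ∈ p.support, x ≠ a.1 → x ≠ b.1 → x ∉ X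

/-- Planarity, via Wagner's theorem: a (finite) graph is planar iff it has neither a
`K₅`-minor nor a `K₃,₃`-minor. -/
def IsPlanar {V : Type} (G : SimpleGraph V) : Prop :=
  ¬ IsMinor (⊤ : SimpleGraph (Fin 5)) G ∧
    ¬ IsMinor (completeBipartiteGraph (Fin 3) (Fin 3)) G

/-- `B`-blind-treewidth. -/
noncomputable def blindTwB {V : Type} (G : SimpleGraph V) : ℕ :=
  blindTreewidth G (fun X => GloballyBipartite G X)

/-- `P`-blind-treewidth. -/
noncomputable def blindTwP {V : Type} (G : SimpleGraph V) : ℕ :=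
  blindTreewidth G (fun X => IsPlanar (Torso G X))

/-- `(B ∪ P)`-blind-treewidth. -/
noncomputable def blindTwBP {V : Type} (G : SimpleGraph V) : ℕ :=
  blindTreewidth G (fun X => GloballyBipartite G X ∨ IsPlanar (Torso G X))

/-! ### Grids and their parity variants -/

/-- Grid adjacency (one step in exactly one coordinate) on coordinates. -/
def GridRel (a b : ℕ × ℕ) : Prop :=
  (a.1 = b.1 ∧ a.2 + 1 = b.2) ∨ (a.2 = b.2 ∧ a.1 + 1 = b.1)

/-- The `(n × m)`-grid. -/
def gridGraph (n m : ℕ) : SimpleGraph (Fin n × Fin m) :=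
  SimpleGraph.fromRel fun a b => GridRel (a.1.val, a.2.val) (b.1.val, b.2.val)

/-- The singly parity-breaking grid `S_k`: the `(2k × 2k)`-grid plus the edge
`{(k,k), (k+1,k+1)}` (0-indexed: `{(k-1,k-1), (k,k)}`). -/
def spbGrid (k : ℕ) : SimpleGraph (Fin (2 * k) × Fin (2 * k)) :=
  SimpleGraph.fromRel fun a b =>
    GridRel (a.1.val, a.2.val) (b.1.val, b.2.val) ∨
      (a.1.val = k - 1 ∧ a.2.val = k - 1 ∧ b.1.val = k ∧ b.2.val = k)

/-- The single-crossing grid `U_k`: the `(2k × 2k)`-grid plus the two crossing edges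
`{(k,k),(k+1,k+1)}` and `{(k+1,k),(k,k+1)}`.  This is also the singly parity-crossing
grid `C¹_k`. -/
def scGrid (k : ℕ) : SimpleGraph (Fin (2 * k) × Fin (2 * k)) :=
  SimpleGraph.fromRel fun a b =>
    GridRel (a.1.val, a.2.val) (b.1.val, b.2.val) ∨
      (a.1.val = k - 1 ∧ a.2.val = k - 1 ∧ b.1.val = k ∧ b.2.val = k) ∨
      (a.1.val = k ∧ a.2.val = k - 1 ∧ b.1.val = k - 1 ∧ b.2.val = k)

/-- The singly parity-crossing grid `C¹_k`. -/
abbrev spcGrid1 := scGrid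

/-- The singly parity-crossing grid `C²_k`: the `(2k × 2k)`-grid plus the edge
`{(k,k),(k+1,k+1)}` and the edge `{(k,k+1),(k+1,k)}` subdivided once by the new
vertex `none`. -/
def spcGrid2 (k : ℕ) : SimpleGraph (Option (Fin (2 * k) × Fin (2 * k))) :=
  SimpleGraph.fromRel fun a b =>
    match a, b with
    | some a, some b =>
        GridRel (a.1.val, a.2.val) (b.1.val, b.2.val) ∨
          (a.1.val = k - 1 ∧ a.2.val = k - 1 ∧ b.1.val = k ∧ b.2.val = k)
    | some a, none => (a.1.val = k - 1 ∧ a.2.val = k) ∨ (a.1.val = k ∧ a.2.val = k - 1)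
    | _, _ => False

/-- The singly parity-crossing grid `C³_k`: the `(2k × 2k)`-grid plus both crossing edges,
each subdivided once (by `inr false = y` on `{(k,k),(k+1,k+1)}` and `inr true = x` on
`{(k,k+1),(k+1,k)}`), together with the edge between `(k+1,k+1)` and `x`. -/
def spcGrid3 (k : ℕ) : SimpleGraph ((Fin (2 * k) × Fin (2 * k)) ⊕ Bool) :=
  SimpleGraph.fromRel fun a b =>
    match a, b with
    | Sum.inl a, Sum.inl b => GridRel (a.1.val, a.2.val) (b.1.val, b.2.val)
    | Sum.inl a, Sum.inr x =>
        (x = false ∧ ((a.1.val = k - 1 ∧ a.2.val = k - 1) ∨ (a.1.val = k ∧ a.2.val = k))) ∨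
        (x = true ∧ ((a.1.val = k - 1 ∧ a.2.val = k) ∨ (a.1.val = k ∧ a.2.val = k - 1) ∨
            (a.1.val = k ∧ a.2.val = k)))
    | _, _ => False

/-- `big_S(G)`: the largest `k` such that `G` contains `S_k` as an odd-minor. -/
noncomputable def bigS {V : Type} (G : SimpleGraph V) : ℕ :=
  sSup {k | IsOddMinor (spbGrid k) G}

/-- `big_U(G)`: the largest `k` such that `G` contains `U_k` as a minor. -/
noncomputable def bigU {V : Type} (G : SimpleGraph V) : ℕ :=
  sSup {k | IsMinor (scGrid k) G}

/-- `big_C(G)`: the largest `k` such that `G` contains some `Cⁱ_k` as an odd-minor. -/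
noncomputable def bigC {V : Type} (G : SimpleGraph V) : ℕ :=
  sSup {k | IsOddMinor (spcGrid1 k) G ∨ IsOddMinor (spcGrid2 k) G ∨ IsOddMinor (spcGrid3 k) G}

/-! ### Connectivity, blocks, ears, cuts -/

/-- `G` is 2-connected: at least 3 vertices and `G - v` is connected for every `v`. -/
def TwoConnected {V : Type} (G : SimpleGraph V) : Prop :=
  3 ≤ Nat.card V ∧ ∀ v : V, (G.induce ({v}ᶜ : Set V)).Connected

/-- `v` is a cutvertex of `H`: deleting `v` increases the number of components. -/
def IsCutvertex {α : Type} (H : SimpleGraph α) (v : α) : Prop :=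
  Nat.card H.ConnectedComponent < Nat.card (H.induce ({v}ᶜ : Set α)).ConnectedComponent

/-- `B` is a block of `G`: a maximal connected subgraph of `G` without a cutvertex. -/
def IsBlock {V : Type} (G : SimpleGraph V) (B : G.Subgraph) : Prop :=
  B.coe.Connected ∧ (∀ v : B.verts, ¬ IsCutvertex B.coe v) ∧
    ∀ B' : G.Subgraph, B ≤ B' → B'.coe.Connected →
      (∀ v : B'.verts, ¬ IsCutvertex B'.coe v) → B = B'

/-- `p` is an `H`-ear in `G`: a path with both endvertices in `H`, internally
vertex-disjoint from `H` and edge-disjoint from `H`. -/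
def IsEar {V : Type} {G : SimpleGraph V} (H : G.Subgraph) {a b : V} (p : G.Walk a b) : Prop :=
  p.IsPath ∧ a ∈ H.verts ∧ b ∈ H.verts ∧
    (∀ x ∈ p.support, x ≠ a → x ≠ b → x ∉ H.verts) ∧
    ∀ e ∈ p.edges, e ∉ H.edgeSet

/-- `p` is an odd `H`-ear: `H` is bipartite but `H ∪ p` is not. -/
def IsOddEar {V : Type} {G : SimpleGraph V} (H : G.Subgraph) {a b : V} (p : G.Walk a b) :
    Prop :=
  IsEar H p ∧ H.coe.Colorable 2 ∧ ¬ ((H ⊔ p.toSubgraph).coe.Colorable 2)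

/-- `∂_G(X)`: the set of edges of `G` with exactly one endvertex in `X`. -/
def edgeBoundary {V : Type} (G : SimpleGraph V) (X : Set V) : Set (Sym2 V) :=
  {e | e ∈ G.edgeSet ∧ ∃ a b, e = s(a, b) ∧ a ∈ X ∧ b ∉ X}

/-- `F` is a cut of `G`: `F = ∂_G(X)` for some non-empty proper `X ⊆ V(G)`. -/
def IsCut {V : Type} (G : SimpleGraph V) (F : Set (Sym2 V)) : Prop :=
  ∃ X : Set V, X.Nonempty ∧ X ≠ Set.univ ∧ F = edgeBoundary G X

/-- `F` is a cut of the subgraph `B` (viewed as a graph in its own right). -/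
def SubgraphIsCut {V : Type} {G : SimpleGraph V} (B : G.Subgraph) (F : Set (Sym2 V)) : Prop :=
  ∃ X : Set V, X ⊆ B.verts ∧ X.Nonempty ∧ X ≠ B.verts ∧
    F = {e | e ∈ B.edgeSet ∧ ∃ a b, e = s(a, b) ∧ a ∈ X ∧ b ∈ B.verts ∧ b ∉ X}

/-! ### Walls -/

/-- Vertex set of the elementary `k`-wall, as a subset of the 1-indexed `(k × 2k)`-grid:
the two degree-one vertices of the brick pattern are removed. -/
def elemWallVerts (k : ℕ) : Set (ℕ × ℕ) :=
  {p | 1 ≤ p.1 ∧ p.1 ≤ k ∧ 1 ≤ p.2 ∧ p.2 ≤ 2 * k ∧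
      ¬(p.1 = 1 ∧ p.2 = 1) ∧ ¬(p.1 = k ∧ p.2 = (if k % 2 = 0 then 1 else 2 * k))}

/-- Adjacency of the elementary wall: all horizontal grid edges, and the vertical grid
edges `{(i,j),(i+1,j)}` with `i + j` odd. -/
def elemWallRel (a b : ℕ × ℕ) : Prop :=
  (a.1 = b.1 ∧ a.2 + 1 = b.2) ∨ (a.2 = b.2 ∧ a.1 + 1 = b.1 ∧ (a.1 + a.2) % 2 = 1)

/-- The elementary `k`-wall. -/
def elemWall (k : ℕ) : SimpleGraph (elemWallVerts k) :=
  SimpleGraph.fromRel fun a b => elemWallRel a.1 b.1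

/-- The four corners of the elementary `k`-wall. -/
def elemWallCorners (k : ℕ) : Set (ℕ × ℕ) :=
  {(1, 2), (1, 2 * k), (k, if k % 2 = 0 then 2 else 1),
    (k, if k % 2 = 0 then 2 * k else 2 * k - 1)}

/-- `{a, b}` is an edge of the perimeter of the elementary `k`-wall: both ends in the
first row, the last row, the first (wall-)column, or the last (wall-)column. -/
def elemPerimEdge (k : ℕ) (a b : ℕ × ℕ) : Prop :=
  (a.1 = 1 ∧ b.1 = 1) ∨ (a.1 = k ∧ b.1 = k) ∨
    (a.2 ≤ 2 ∧ b.2 ≤ 2) ∨ (2 * k - 1 ≤ a.2 ∧ 2 * k - 1 ≤ b.2)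

/-- A `k`-wall in `G`, given by subdivision data for the elementary `k`-wall:
injective branch-vertex map `φ` and internally disjoint paths for the wall edges. -/
structure WallIn {V : Type} (G : SimpleGraph V) (k : ℕ) where
  φ : elemWallVerts k → V
  inj : Function.Injective φ
  path : ∀ ⦃v w : elemWallVerts k⦄, (elemWall k).Adj v w → G.Walk (φ v) (φ w)
  isPath : ∀ ⦃v w⦄ (h : (elemWall k).Adj v w), (path h).IsPath
  path_symm : ∀ ⦃v w⦄ (h : (elemWall k).Adj v w), path h.symm = (path h).reverse
  internal : ∀ ⦃v w⦄ (h : (elemWall k).Adj v w), ∀ x ∈ (path h).support,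
      x ∈ Set.range φ → x = φ v ∨ x = φ w
  disj : ∀ ⦃v w v' w'⦄ (h : (elemWall k).Adj v w) (h' : (elemWall k).Adj v' w'),
      s(v, w) ≠ s(v', w') → ∀ x ∈ (path h).support, x ∈ (path h').support → x ∈ Set.range φ

/-- The wall, as a subgraph of `G` (the union of all its paths). -/
def WallIn.subgraph {V : Type} {G : SimpleGraph V} {k : ℕ} (S : WallIn G k) : G.Subgraph :=
  ⨆ (v : elemWallVerts k) (w : elemWallVerts k) (h : (elemWall k).Adj v w),
    (S.path h).toSubgraph

/-- The vertices on the perimeter of the wall. -/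
def WallIn.perimeter {V : Type} {G : SimpleGraph V} {k : ℕ} (S : WallIn G k) : Set V :=
  {x | ∃ (v w : elemWallVerts k) (h : (elemWall k).Adj v w),
      elemPerimEdge k v.1 w.1 ∧ x ∈ (S.path h).support}

/-- The corners of the wall. -/
def WallIn.corners {V : Type} {G : SimpleGraph V} {k : ℕ} (S : WallIn G k) : Set V :=
  {x | ∃ v : elemWallVerts k, v.1 ∈ elemWallCorners k ∧ x = S.φ v}

/-- The wall is clean: it has a proper 2-colouring in which all branch vertices
(vertices of degree 3 in the wall) and all corners lie in the same colour class. -/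
def WallIn.Clean {V : Type} {G : SimpleGraph V} {k : ℕ} (S : WallIn G k) : Prop :=
  ∃ (c : V → Bool) (col : Bool),
    (∀ ⦃a b : V⦄, S.subgraph.Adj a b → c a ≠ c b) ∧
    (∀ x : V, (3 ≤ (S.subgraph.neighborSet x).ncard ∨ x ∈ S.corners) → c x = col)

/-- `G` contains a clean cross-wall of order `k` as a subgraph: a clean `k`-wall `W`
with corners `s₁, s₂, t₁, t₂` (in cyclic order along the perimeter) together with two
vertex-disjoint `W`-ears `P₁` from `s₁` to `t₁` and `P₂` from `s₂` to `t₂`. -/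
def HasCleanCrossWall {V : Type} (G : SimpleGraph V) (k : ℕ) : Prop :=
  ∃ S : WallIn G k, S.Clean ∧
    ∃ (s₁ s₂ t₁ t₂ : V) (p₁ : G.Walk s₁ t₁) (p₂ : G.Walk s₂ t₂),
      (∃ v : elemWallVerts k, S.φ v = s₁ ∧ v.1 = (1, 2)) ∧
      (∃ v : elemWallVerts k, S.φ v = s₂ ∧ v.1 = (1, 2 * k)) ∧
      (∃ v : elemWallVerts k, S.φ v = t₁ ∧
        v.1 = (k, if k % 2 = 0 then 2 * k else 2 * k - 1)) ∧
      (∃ v : elemWallVerts k, S.φ v = t₂ ∧ v.1 = (k, if k % 2 = 0 then 2 else 1)) ∧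
      IsEar S.subgraph p₁ ∧ IsEar S.subgraph p₂ ∧
      ∀ x ∈ p₁.support, x ∉ p₂.support

/-!
Fix a proper 2-colouring `c : V → ZMod 2` of `H`; a walk from `u` to `v` breaks parity if
`c v ≠ c u + length`. Since `H` is connected, every 2-colouring of `H ∪ P` agrees with `c`
on `H` up to a swap, so a parity-breaking `H`-ear is odd. A parity-breaking path between
vertices of `H` splits at any inner vertex of `H` into two shorter paths one of which breaks
parity, so it eventually yields a parity-breaking `H`-ear.

Such a path is found from an odd lollipop: an odd cycle `C` with a path `T` from its vertex `x`
to `u ∈ H`, meeting `C` only in `x`. As `G - x` is connected, some path `R` avoiding `x` runs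
from a vertex `r ≠ x` of `C` to a vertex `z` of `T ∪ H`, meeting `C` and `T ∪ H` only in its
ends. The two arcs of `C` from `x` to `r` have lengths of different parity. If `z ∉ T`, then
`T`, the right arc and `R` form a parity-breaking path from `u` to `z ∈ H`. Otherwise `T` up to
`z`, an arc and `R` form a new odd cycle whose tail, the rest of `T`, is shorter.
-/

lemma ZMod.eq_add_one_of_ne {a b : ZMod 2} (h : a ≠ b) : b = a + 1 := by
  revert a b; decide

namespace SimpleGraph

variable {V : Type} {G : SimpleGraph V}

namespace Walk

variable {u v w x : V}

lemma IsPath.start_notMem_support_tail {p : G.Walk u v} (hp : p.IsPath) : u ∉ p.support.tail :=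
  (List.nodup_cons.mp (p.cons_tail_support ▸ hp.support_nodup)).1

lemma IsPath.append {p : G.Walk u v} {q : G.Walk v w} (hp : p.IsPath) (hq : q.IsPath)
    (h : ∀ y ∈ p.support, y ∈ q.support → y = v) : (p.append q).IsPath := by
  rw [isPath_def, support_append]
  refine hp.support_nodup.append hq.support_nodup.tail fun y hyp hyq => ?_
  exact hq.start_notMem_support_tail (h y hyp (List.mem_of_mem_tail hyq) ▸ hyq)

lemma IsPath.eq_of_mem_support_append {p : G.Walk u v} {q : G.Walk v w}
    (h : (p.append q).IsPath) {y : V} (hyp : y ∈ p.support) (hyq : y ∈ q.support) : y = v := by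
  rw [← cons_tail_support, List.mem_cons] at hyq
  refine hyq.resolve_right fun hyq => ?_
  have := h.support_nodup
  rw [support_append] at this
  exact List.disjoint_of_nodup_append this hyp hyq

lemma IsPath.isCycle_append_of_inter {p : G.Walk u v} {q : G.Walk v u} (hp : p.IsPath)
    (hq : q.IsPath) (h : ∀ y ∈ p.support, y ∈ q.support → y = u ∨ y = v)
    (hn : 1 < p.length ∨ 1 < q.length) : (p.append q).IsCycle := by
  refine hp.isCycle_append hq (fun y hyp hyq => ?_) hn
  rcases h y (List.mem_of_mem_tail hyp) (List.mem_of_mem_tail hyq) with rfl | rfl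
  · exact hp.start_notMem_support_tail hyp
  · exact hq.start_notMem_support_tail hyq

theorem exists_eq_append_loop_of_not_nodup : ∀ {u v : V} (p : G.Walk u v), ¬ p.support.Nodup →
    ∃ (z : V) (p₁ : G.Walk u z) (c : G.Walk z z) (p₂ : G.Walk z v),
      ¬ c.Nil ∧ p = p₁.append (c.append p₂)
  | _, _, nil, h => absurd (by simp) h
  | u, _, cons hadj p, h => by
    classical
    by_cases hu : u ∈ p.support
    · exact ⟨u, nil, cons hadj (p.takeUntil u hu), p.dropUntil u hu, by simp,
        by simp [take_spec]⟩
    · obtain ⟨z, p₁, c, p₂, hc, rfl⟩ :=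
        exists_eq_append_loop_of_not_nodup p fun hp => h (by simp [hu, hp])
      exact ⟨z, cons hadj p₁, c, p₂, hc, rfl⟩

theorem exists_isCycle_odd_length {v : V} (p : G.Walk v v) (hp : Odd p.length) :
    ∃ (x : V) (c : G.Walk x x), c.IsCycle ∧ Odd c.length := by
  induction hn : p.length using Nat.strongRec generalizing v with | ind n ih =>
  cases p with
  | nil => simp at hp
  | cons hadj q =>
    by_cases hq : q.IsPath
    · refine ⟨v, _, (cons_isCycle_iff q hadj).mpr ⟨hq, fun he => ?_⟩, hp⟩
      rw [length_cons, hq.length_eq_one_of_mem_edges (Sym2.eq_swap ▸ he)] at hp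
      exact Nat.not_odd_iff_even.mpr even_two hp
    · obtain ⟨z, q₁, c, q₂, hc, rfl⟩ :=
        exists_eq_append_loop_of_not_nodup q (mt IsPath.mk' hq)
      have hc := not_nil_iff_lt_length.mp hc
      simp only [length_cons, length_append] at hn hp
      rcases Nat.even_or_odd c.length with he | ho
      · refine ih _ ?_ (cons hadj (q₁.append q₂)) ?_ rfl <;> rw [length_cons, length_append]
        · omega
        rw [Nat.odd_iff] at hp ⊢
        rw [Nat.even_iff] at he
        omega
      · exact ih _ (by omega) c ho rfl

theorem IsCycle.exists_isPath_length_ne {C : G.Walk x x} (hC : C.IsCycle) (hodd : Odd C.length)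
    {r : V} (hr : r ∈ C.support) (hrx : r ≠ x) (t : ZMod 2) :
    ∃ A : G.Walk x r, A.IsPath ∧ A.support ⊆ C.support ∧ (A.length : ZMod 2) ≠ t := by
  classical
  have hspec := C.take_spec hr
  by_cases h : ((C.takeUntil r hr).length : ZMod 2) ≠ t
  · exact ⟨_, hC.isPath_takeUntil hr, C.support_takeUntil_subset_support hr, h⟩
  refine ⟨(C.dropUntil r hr).reverse, ?_, ?_, fun h' => ?_⟩
  · have hC' : ((C.takeUntil r hr).append (C.dropUntil r hr)).IsCycle := by rwa [hspec]
    exact (hC'.isPath_of_append_right (not_nil_of_ne hrx.symm)).reverse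
  · simpa using C.support_dropUntil_subset_support hr
  · have hlen : ((C.length : ℕ) : ZMod 2) = t + t := by
      rw [← hspec, length_append, Nat.cast_add, not_not.mp h, ← h', length_reverse]
    exact Nat.not_even_iff_odd.mpr hodd
      (ZMod.natCast_eq_zero_iff_even.mp (hlen.trans (CharTwo.add_self_eq_zero t)))

def BreaksParity (c : V → ZMod 2) (p : G.Walk u v) : Prop :=
  c v ≠ c u + p.length

lemma BreaksParity.append {c : V → ZMod 2} {p : G.Walk u v} {q : G.Walk v w}
    (h : (p.append q).BreaksParity c) : p.BreaksParity c ∨ q.BreaksParity c := by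
  simp only [BreaksParity, length_append, Nat.cast_add] at *
  by_contra! hpq
  exact h (by rw [hpq.2, hpq.1]; ring)

lemma apply_eq_add_length {f : V → ZMod 2} (p : G.Walk u v)
    (hf : ∀ ⦃x y⦄, s(x, y) ∈ p.edges → f x ≠ f y) : f v = f u + p.length := by
  induction p with
  | nil => simp
  | @cons a b _ hadj p ih =>
    rw [length_cons, Nat.cast_succ, ih fun x y hxy => hf (by simp [hxy]),
      ZMod.eq_add_one_of_ne (hf (x := a) (y := b) (by simp))]
    ring

theorem exists_isPath_to_set (S : Set V) : ∀ {u v : V} (p : G.Walk u v), v ∈ S →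
    ∃ z ∈ S, ∃ q : G.Walk u z, q.IsPath ∧ q.support ⊆ p.support ∧
      ∀ y ∈ q.support, y ∈ S → y = z
  | u, _, nil, hv => ⟨u, hv, nil, .nil, List.Subset.refl _, by simp⟩
  | u, _, cons hadj p, hv => by
    classical
    by_cases hu : u ∈ S
    · exact ⟨u, hu, nil, .nil, by simp, by simp⟩
    obtain ⟨z, hz, q, -, hqp, hqS⟩ := exists_isPath_to_set S p hv
    have hsub : (cons hadj q).bypass.support ⊆ (cons hadj q).support :=
      support_bypass_subset_support _
    refine ⟨z, hz, _, bypass_isPath _, List.Subset.trans hsub (List.cons_subset_cons _ hqp), ?_⟩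
    intro y hy hyS
    rcases List.mem_cons.mp (hsub hy) with rfl | hy
    · exact absurd hyS hu
    · exact hqS y hy hyS

theorem exists_isPath_between_sets (A B : Set V) {u v : V} (p : G.Walk u v) (hu : u ∈ A)
    (hv : v ∈ B) :
    ∃ r ∈ A, ∃ z ∈ B, ∃ q : G.Walk r z, q.IsPath ∧ q.support ⊆ p.support ∧
      (∀ y ∈ q.support, y ∈ A → y = r) ∧ (∀ y ∈ q.support, y ∈ B → y = z) := by
  obtain ⟨z, hz, q₁, -, hq₁p, hq₁B⟩ := p.exists_isPath_to_set B hv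
  obtain ⟨r, hr, q₂, hq₂, hq₂q₁, hq₂A⟩ :=
    q₁.reverse.exists_isPath_to_set A (by simpa using hu)
  have hsub : q₂.reverse.support ⊆ q₁.support := fun y hy => by
    simpa using hq₂q₁ (by simpa using hy)
  exact ⟨r, hr, z, hz, q₂.reverse, hq₂.reverse, List.Subset.trans hsub hq₁p,
    by simpa using hq₂A, fun y hy hyB => hq₁B y (hsub hy) hyB⟩

end Walk

theorem exists_isCycle_odd_length_of_not_colorable (h : ¬ G.Colorable 2) :
    ∃ (x : V) (c : G.Walk x x), c.IsCycle ∧ Odd c.length := by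
  simp only [two_colorable_iff_forall_loop_even, not_forall, Nat.not_even_iff_odd] at h
  obtain ⟨v, p, hp⟩ := h
  exact p.exists_isCycle_odd_length hp

lemma Subgraph.exists_zmod_two_coloring {H : G.Subgraph} (h : H.coe.Colorable 2) :
    ∃ c : V → ZMod 2, ∀ ⦃x y⦄, H.Adj x y → c x ≠ c y := by
  classical
  obtain ⟨C⟩ := h
  let C' := H.coe.recolorOfEquiv (ZMod.finEquiv 2).toEquiv C
  refine ⟨fun v => if hv : v ∈ H.verts then C' ⟨v, hv⟩ else 0, fun x y hxy => ?_⟩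
  simp only [dif_pos hxy.fst_mem, dif_pos hxy.snd_mem]
  exact C'.valid (show H.coe.Adj ⟨x, hxy.fst_mem⟩ ⟨y, hxy.snd_mem⟩ from hxy)

lemma Subgraph.sub_eq_sub_of_connected {H : G.Subgraph} (hH : H.coe.Connected)
    {c d : V → ZMod 2} (hc : ∀ ⦃x y⦄, H.Adj x y → c x ≠ c y)
    (hd : ∀ ⦃x y⦄, H.Adj x y → d x ≠ d y) {a b : V} (ha : a ∈ H.verts)
    (hb : b ∈ H.verts) :
    c b - c a = d b - d a := by
  obtain ⟨q⟩ := hH.preconnected ⟨a, ha⟩ ⟨b, hb⟩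
  have hcq := q.apply_eq_add_length (f := fun y : H.verts => c y)
    fun x y h => hc (q.adj_of_mem_edges h)
  have hdq := q.apply_eq_add_length (f := fun y : H.verts => d y)
    fun x y h => hd (q.adj_of_mem_edges h)
  rw [hcq, hdq]
  ring

end SimpleGraph

namespace TwoConnected

variable {V : Type} {G : SimpleGraph V}

lemma nontrivial (hG : TwoConnected G) : Nontrivial V := by
  have h3 := hG.1
  have : Finite V := Nat.finite_of_card_ne_zero (by omega)
  rw [← Finite.one_lt_card_iff_nontrivial]
  omega

lemma exists_walk_notMem_support (hG : TwoConnected G) {x u v : V} (hu : u ≠ x) (hv : v ≠ x) :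
    ∃ p : G.Walk u v, x ∉ p.support := by
  obtain ⟨p⟩ := (hG.2 x).preconnected ⟨u, hu⟩ ⟨v, hv⟩
  refine ⟨p.map (Embedding.induce _).toHom, fun hx => ?_⟩
  obtain ⟨⟨y, hy⟩, -, hyx⟩ := List.mem_map.mp ((Walk.support_map _ _) ▸ hx)
  exact hy hyx

lemma connected (hG : TwoConnected G) : G.Connected := by
  have : Finite V := Nat.finite_of_card_ne_zero (by have := hG.1; omega)
  have : Nonempty V := hG.nontrivial.to_nonempty
  refine ⟨fun u v => ?_⟩
  obtain ⟨x, hxu, hxv⟩ := ENat.exists_ne_ne_of_three_le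
    (by simpa [ENat.card_eq_coe_natCard] using hG.1) u v
  obtain ⟨p, -⟩ := hG.exists_walk_notMem_support hxu.symm hxv.symm
  exact p.reachable

end TwoConnected

open Walk

section Ears

variable {V : Type} {G : SimpleGraph V} {H : G.Subgraph} {c : V → ZMod 2}

theorem isOddEar_of_breaksParity (hH : H.coe.Connected) (hHb : H.coe.Colorable 2)
    (hc : ∀ ⦃x y⦄, H.Adj x y → c x ≠ c y) {a b : V} {p : G.Walk a b} (hp : IsEar H p)
    (hpc : p.BreaksParity c) : IsOddEar H p := by
  refine ⟨hp, hHb, fun hcol => ?_⟩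
  obtain ⟨d, hd⟩ := Subgraph.exists_zmod_two_coloring hcol
  have hdp : d b = d a + p.length := p.apply_eq_add_length fun x y hxy =>
    hd (Subgraph.sup_adj.mpr (Or.inr (p.adj_toSubgraph_iff_mem_edges.mpr hxy)))
  have hcd := Subgraph.sub_eq_sub_of_connected hH hc
    (fun x y hxy => hd (Subgraph.sup_adj.mpr (Or.inl hxy))) hp.2.1 hp.2.2.1
  exact hpc (by linear_combination hcd + hdp)

theorem isEar_of_breaksParity (hc : ∀ ⦃x y⦄, H.Adj x y → c x ≠ c y) {u v : V}
    {p : G.Walk u v} (hp : p.IsPath) (hu : u ∈ H.verts) (hv : v ∈ H.verts)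
    (hint : ∀ y ∈ p.support, y ≠ u → y ≠ v → y ∉ H.verts) (hpc : p.BreaksParity c) :
    IsEar H p := by
  refine ⟨hp, hu, hv, hint, fun e he heH => ?_⟩
  induction e using Sym2.ind with | h x y =>
  have hxy : H.Adj x y := heH
  have hend : ∀ z ∈ p.support, z ∈ H.verts → z = u ∨ z = v := fun z hz hzH => by
    by_contra! h
    exact hint z hz h.1 h.2 hzH
  have huv : H.Adj u v ∧ s(u, v) ∈ p.edges := by
    rcases hend x (p.fst_mem_support_of_mem_edges he) hxy.fst_mem with rfl | rfl <;>
      rcases hend y (p.snd_mem_support_of_mem_edges he) hxy.snd_mem with rfl | rfl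
    · exact absurd rfl hxy.ne
    · exact ⟨hxy, he⟩
    · exact ⟨hxy.symm, Sym2.eq_swap ▸ he⟩
    · exact absurd rfl hxy.ne
  apply hpc
  rw [hp.length_eq_one_of_mem_edges huv.2, Nat.cast_one]
  exact ZMod.eq_add_one_of_ne (hc huv.1)

theorem exists_isEar_breaksParity_of_isPath (hc : ∀ ⦃x y⦄, H.Adj x y → c x ≠ c y)
    {u v : V} (p : G.Walk u v) (hp : p.IsPath) (hu : u ∈ H.verts) (hv : v ∈ H.verts)
    (hpc : p.BreaksParity c) : ∃ (a b : V) (q : G.Walk a b), IsEar H q ∧ q.BreaksParity c := by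
  classical
  induction hn : p.length using Nat.strongRec generalizing u v with | ind n ih =>
  by_cases hint : ∀ y ∈ p.support, y ≠ u → y ≠ v → y ∉ H.verts
  · exact ⟨u, v, p, isEar_of_breaksParity hc hp hu hv hint hpc, hpc⟩
  push Not at hint
  obtain ⟨m, hm, hmu, hmv, hmH⟩ := hint
  rw [← p.take_spec hm] at hpc
  rcases hpc.append with h | h
  · exact ih _ (hn ▸ length_takeUntil_lt_length hm hmv) _ (hp.takeUntil hm) hu hmH h rfl
  · exact ih _ (hn ▸ length_dropUntil_lt_length hm hmu) _ (hp.dropUntil hm) hmH hv h rfl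

end Ears

section Lollipop

variable {V : Type} {G : SimpleGraph V} {x u : V}

structure IsOddLollipop (T : G.Walk x u) (C : G.Walk x x) : Prop where
  isPath : T.IsPath
  isCycle : C.IsCycle
  odd : Odd C.length
  inter : ∀ y ∈ T.support, y ∈ C.support → y = x

namespace IsOddLollipop

variable {T : G.Walk x u} {C : G.Walk x x} {r z : V} {R : G.Walk r z}

theorem exists_isPath_breaksParity (hL : IsOddLollipop T C) (hR : R.IsPath)
    (hr : r ∈ C.support) (hrx : r ≠ x) (hRC : ∀ y ∈ R.support, y ∈ C.support → y = r)
    (hRT : ∀ y ∈ R.support, y ∉ T.support) (c : V → ZMod 2) :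
    ∃ p : G.Walk u z, p.IsPath ∧ p.BreaksParity c := by
  obtain ⟨A, hA, hAC, hAt⟩ :=
    hL.isCycle.exists_isPath_length_ne hL.odd hr hrx (c z - c u - T.length - R.length)
  have hAR : (A.append R).IsPath := hA.append hR fun y hyA hyR => hRC y hyR (hAC hyA)
  refine ⟨T.reverse.append (A.append R), hL.isPath.reverse.append hAR fun y hyT hy => ?_, ?_⟩
  · rw [support_reverse, List.mem_reverse] at hyT
    rcases (mem_support_append_iff _ _).mp hy with hyA | hyR
    · exact hL.inter y hyT (hAC hyA)
    · exact absurd hyT (hRT y hyR)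
  · intro h
    simp only [length_append, length_reverse, Nat.cast_add] at h
    exact hAt (by linear_combination -h)

theorem exists_shorter (hL : IsOddLollipop T C) (hR : R.IsPath) (hr : r ∈ C.support)
    (hrx : r ≠ x) (hz : z ∈ T.support) (hxR : x ∉ R.support)
    (hRC : ∀ y ∈ R.support, y ∈ C.support → y = r)
    (hRT : ∀ y ∈ R.support, y ∈ T.support → y = z) :
    ∃ (T' : G.Walk z u) (C' : G.Walk z z), IsOddLollipop T' C' ∧ T'.length < T.length := by
  classical
  have hzx : z ≠ x := fun h => hxR (h ▸ R.end_mem_support)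
  set T₁ := T.takeUntil z hz
  set T₂ := T.dropUntil z hz
  have hT : (T₁.append T₂).IsPath := by rw [take_spec]; exact hL.isPath
  have hT₁ : T₁.support ⊆ T.support := T.support_takeUntil_subset_support hz
  have hT₂ : T₂.support ⊆ T.support := T.support_dropUntil_subset_support hz
  obtain ⟨A, hA, hAC, hAt⟩ :=
    hL.isCycle.exists_isPath_length_ne hL.odd hr hrx (-(T₁.length + R.length : ZMod 2))
  have hQ : (T₁.reverse.append A).IsPath := (hL.isPath.takeUntil hz).reverse.append hA
    fun y hy hyA => hL.inter y (hT₁ (by simpa using hy)) (hAC hyA)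
  have hmem : ∀ y ∈ (T₁.reverse.append A).support, y ∈ T₁.support ∨ y ∈ A.support := by
    simp
  refine ⟨T₂, (T₁.reverse.append A).append R, ⟨hL.isPath.dropUntil hz, ?_, ?_, ?_⟩,
    length_dropUntil_lt_length hz hzx⟩
  · refine hQ.isCycle_append_of_inter hR (fun y hy hyR => ?_) (Or.inl ?_)
    · rcases hmem y hy with hy | hy
      · exact Or.inl (hRT y hyR (hT₁ hy))
      · exact Or.inr (hRC y hyR (hAC hy))
    · have h₁ := not_nil_iff_lt_length.mp (not_nil_of_ne (p := T₁) hzx.symm)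
      have h₂ := not_nil_iff_lt_length.mp (not_nil_of_ne (p := A) hrx.symm)
      simp only [length_append, length_reverse]
      omega
  · rw [← Nat.not_even_iff_odd, ← ZMod.natCast_eq_zero_iff_even]
    intro h
    simp only [length_append, length_reverse, Nat.cast_add] at h
    exact hAt (by linear_combination h)
  · intro y hy hyC
    rcases (mem_support_append_iff _ _).mp hyC with hyQ | hyR
    · rcases hmem y hyQ with hy₁ | hyA
      · exact hT.eq_of_mem_support_append hy₁ hy
      · obtain rfl := hL.inter y (hT₂ hy) (hAC hyA)
        exact absurd (hT.eq_of_mem_support_append T₁.start_mem_support hy).symm hzx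
    · exact hRT y hyR (hT₂ hy)

theorem exists_isPath_breaksParity_of_twoConnected (hL : IsOddLollipop T C)
    (hG : TwoConnected G) {S : Set V} (hS : S.Nontrivial) (hu : u ∈ S) (c : V → ZMod 2) :
    ∃ (a b : V) (p : G.Walk a b), p.IsPath ∧ a ∈ S ∧ b ∈ S ∧ p.BreaksParity c := by
  induction hn : T.length using Nat.strongRec generalizing x u with | ind n ih =>
  obtain ⟨h₀, hh₀, hh₀x⟩ := hS.exists_ne x
  have hC := hL.isCycle.not_nil
  obtain ⟨W, hxW⟩ := hG.exists_walk_notMem_support (C.adj_snd hC).ne.symm hh₀x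
  obtain ⟨r, hr, z, hz, R, hR, hRW, hRC, hRTS⟩ :=
    W.exists_isPath_between_sets {y | y ∈ C.support} {y | y ∈ T.support ∨ y ∈ S}
      (List.mem_of_mem_tail (snd_mem_tail_support hC)) (Or.inr hh₀)
  have hxR : x ∉ R.support := fun h => hxW (hRW h)
  have hrx : r ≠ x := fun h => hxR (h ▸ R.start_mem_support)
  by_cases hzT : z ∈ T.support
  · obtain ⟨T', C', hL', hlen⟩ := hL.exists_shorter hR hr hrx hzT hxR hRC
      fun y hy hyT => hRTS y hy (Or.inl hyT)
    exact ih _ (hn ▸ hlen) hL' hu rfl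
  · obtain ⟨p, hp, hpc⟩ := hL.exists_isPath_breaksParity hR hr hrx hRC
      (fun y hy hyT => hzT (hRTS y hy (Or.inl hyT) ▸ hyT)) c
    exact ⟨u, z, p, hp, hu, hz.resolve_left hzT, hpc⟩

end IsOddLollipop

end Lollipop

theorem exists_odd_ear_general {V : Type} (G : SimpleGraph V) (H : G.Subgraph)
    (hG2 : TwoConnected G) (hGnb : ¬ G.Colorable 2)
    (hH2 : TwoConnected H.coe) (hHb : H.coe.Colorable 2) :
    ∃ (a b : V) (p : G.Walk a b), IsOddEar H p := by
  classical
  obtain ⟨c, hc⟩ := Subgraph.exists_zmod_two_coloring hHb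
  have hHnt : H.verts.Nontrivial := Set.nontrivial_coe_sort.mp hH2.nontrivial
  obtain ⟨x, C, hC, hCodd⟩ := exists_isCycle_odd_length_of_not_colorable hGnb
  obtain ⟨h, hh⟩ := hHnt.nonempty
  obtain ⟨W⟩ := hG2.connected.preconnected x h
  obtain ⟨x', hx', u, hu, T, hT, -, hTC, -⟩ :=
    W.exists_isPath_between_sets {y | y ∈ C.support} H.verts C.start_mem_support hh
  have hL : IsOddLollipop T (C.rotate x' hx') := ⟨hT, hC.rotate hx', by rwa [length_rotate],
    fun y hy hyC => hTC y hy ((C.mem_support_rotate_iff x' hx').mp hyC)⟩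
  obtain ⟨a, b, p, hp, ha, hb, hpc⟩ :=
    hL.exists_isPath_breaksParity_of_twoConnected hG2 hHnt hu c
  obtain ⟨a, b, q, hq, hqc⟩ := exists_isEar_breaksParity_of_isPath hc p hp ha hb hpc
  exact ⟨a, b, q, isOddEar_of_breaksParity hH2.connected hHb hc hq hqc⟩

/-- Let `H` be a 2-connected bipartite subgraph of a 2-connected
non-bipartite graph `G`.  Then there exists an odd `H`-ear in `G`. -/
theorem exists_odd_ear {V : Type} [Fintype V] (G : SimpleGraph V) (H : G.Subgraph)
    (hG2 : TwoConnected G) (hGnb : ¬ G.Colorable 2)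
    (hH2 : TwoConnected H.coe) (hHb : H.coe.Colorable 2) :
    ∃ (a b : V) (p : G.Walk a b), IsOddEar H p :=
  exists_odd_ear_general G H hG2 hGnb hH2 hHb
end

section
/- For every integer k ≥ 1, the B-blind-treewidth of the singly parity-breaking grid S_k equals tw(S_k) + 1. -/
open SimpleGraph

/-! The grid part of `S_k` is bipartite and the two ends of the extra edge have the same
colour, so a path between them in the grid, closed up by the extra edge, is an odd cycle. Such a
path through the whole top half exists (a comb: along the lowest row of the top half, a
boustrophedon through the rows above it, and back along that row), and its rotation by 180
degrees runs through the whole bottom half. A set in `B` meets each of these two odd cycles at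
most once, so it has at most two vertices, and it never contains both ends of the extra edge.
Hence in every tree-decomposition a largest bag lies outside `B`: if it had at most two
vertices, so would the bag containing the extra edge, which lies outside `B`. So the `B`-blind
width of every tree-decomposition is its width plus one. -/

namespace TreeDecomposition

variable {V : Type} {G : SimpleGraph V}

def single (G : SimpleGraph V) : TreeDecomposition G where
  τ := Unit
  tree := ⊥
  tree_isTree := .of_subsingleton
  bag _ := Set.univ
  bag_cover _ := ⟨(), trivial⟩
  bag_edge _ _ _ := ⟨(), trivial, trivial⟩
  bag_conn _ := @Connected.of_subsingleton _ _ ⟨⟨(), trivial⟩⟩ _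

noncomputable def maxBagCard (D : TreeDecomposition G) : ℕ :=
  sSup {n | ∃ t, n = (D.bag t).ncard}

section Finite

variable [Finite V] (D : TreeDecomposition G)

theorem bddAbove_ncard_bag : BddAbove {n | ∃ t, n = (D.bag t).ncard} :=
  ⟨Nat.card V, by rintro _ ⟨t, rfl⟩; exact Set.ncard_le_card _⟩

theorem ncard_bag_le_maxBagCard (t : D.τ) : (D.bag t).ncard ≤ D.maxBagCard :=
  le_csSup D.bddAbove_ncard_bag ⟨t, rfl⟩

theorem exists_ncard_bag_eq_maxBagCard [Nonempty V] : ∃ t, (D.bag t).ncard = D.maxBagCard := by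
  obtain ⟨t, -⟩ := D.bag_cover (Classical.arbitrary V)
  obtain ⟨t', ht'⟩ := Nat.sSup_mem (s := {n | ∃ t, n = (D.bag t).ncard}) ⟨_, t, rfl⟩
    D.bddAbove_ncard_bag
  exact ⟨t', ht'.symm⟩

theorem exists_two_le_ncard_bag_of_adj {u v : V} (huv : G.Adj u v) :
    ∃ t, u ∈ D.bag t ∧ v ∈ D.bag t ∧ 2 ≤ (D.bag t).ncard := by
  obtain ⟨t, hu, hv⟩ := D.bag_edge huv
  refine ⟨t, hu, hv, ?_⟩
  rw [← Set.ncard_pair huv.ne]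
  exact Set.ncard_le_ncard (Set.pair_subset hu hv)

theorem blindWidth_le_maxBagCard (A : Set V → Prop) : D.blindWidth A ≤ D.maxBagCard :=
  csSup_le' <| by rintro _ ⟨t, -, rfl⟩; exact D.ncard_bag_le_maxBagCard t

theorem ncard_bag_le_blindWidth {A : Set V → Prop} {t : D.τ} (ht : ¬ A (D.bag t)) :
    (D.bag t).ncard ≤ D.blindWidth A :=
  le_csSup ⟨Nat.card V, by rintro _ ⟨t, -, rfl⟩; exact Set.ncard_le_card _⟩ ⟨t, ht, rfl⟩

theorem blindWidth_eq_width_add_one {A : Set V → Prop} (hA : ∀ X, A X → X.ncard ≤ 2)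
    {u v : V} (huv : G.Adj u v) (huvA : ∀ X, u ∈ X → v ∈ X → ¬ A X) :
    D.blindWidth A = D.width + 1 := by
  have : Nonempty V := ⟨u⟩
  obtain ⟨t, hu, hv, htwo⟩ := D.exists_two_le_ncard_bag_of_adj huv
  have htmax := D.ncard_bag_le_maxBagCard t
  obtain ⟨s, hs⟩ := D.exists_ncard_bag_eq_maxBagCard
  have hmax : D.maxBagCard ≤ D.blindWidth A := by
    by_cases hsA : A (D.bag s)
    · have := hA _ hsA
      have := D.ncard_bag_le_blindWidth (huvA _ hu hv)
      omega
    · exact hs ▸ D.ncard_bag_le_blindWidth hsA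
  have := D.blindWidth_le_maxBagCard A
  change _ = D.maxBagCard - 1 + 1
  omega

end Finite

end TreeDecomposition

theorem blindTreewidth_eq_treewidth_add_one {V : Type} {G : SimpleGraph V} {A : Set V → Prop}
    (h : ∀ D : TreeDecomposition G, D.blindWidth A = D.width + 1) :
    blindTreewidth G A = treewidth G + 1 := by
  obtain ⟨D, hD⟩ := Nat.sInf_mem (s := {n | ∃ D : TreeDecomposition G, D.width = n})
    ⟨_, TreeDecomposition.single G, rfl⟩
  apply le_antisymm
  · exact Nat.sInf_le ⟨D, by rw [h, hD, treewidth]⟩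
  · refine le_csInf ⟨_, D, rfl⟩ ?_
    rintro _ ⟨D', rfl⟩
    rw [h]
    exact Nat.succ_le_succ (Nat.sInf_le ⟨D', rfl⟩)

theorem GloballyBipartite.ncard_le_two {V : Type} [Finite V] {G : SimpleGraph V} {X : Set V}
    (hX : GloballyBipartite G X) {u v : V} {C : G.Walk u u} {C' : G.Walk v v}
    (hC : C.IsCycle) (hC' : C'.IsCycle) (hodd : Odd C.length) (hodd' : Odd C'.length)
    (hcover : ∀ x, x ∈ C.support ∨ x ∈ C'.support) : X.ncard ≤ 2 := by
  have hsub : X ⊆ (X ∩ {x | x ∈ C.support}) ∪ (X ∩ {x | x ∈ C'.support}) :=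
    fun x hx => (hcover x).imp (⟨hx, ·⟩) (⟨hx, ·⟩)
  calc X.ncard ≤ ((X ∩ {x | x ∈ C.support}) ∪ (X ∩ {x | x ∈ C'.support})).ncard :=
        Set.ncard_le_ncard hsub
    _ ≤ (X ∩ {x | x ∈ C.support}).ncard + (X ∩ {x | x ∈ C'.support}).ncard :=
        Set.ncard_union_le _ _
    _ ≤ 1 + 1 := add_le_add
        ((Set.ncard_le_one (Set.toFinite _)).2 fun _ ha _ hb => hX C hC hodd ha hb)
        ((Set.ncard_le_one (Set.toFinite _)).2 fun _ ha _ hb => hX C' hC' hodd' ha hb)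

theorem SimpleGraph.exists_isPath_of_injOn {V : Type} {G : SimpleGraph V} (f : ℕ → V) (N : ℕ)
    (hadj : ∀ m < N, G.Adj (f m) (f (m + 1))) (hinj : Set.InjOn f (Set.Iic N)) :
    ∃ p : G.Walk (f 0) (f N), p.IsPath ∧ p.length = N ∧ ∀ m ≤ N, f m ∈ p.support := by
  have hne : (List.range (N + 1)).map f ≠ [] := by simp
  have hchain : ((List.range (N + 1)).map f).IsChain G.Adj := by
    rw [List.isChain_map, List.isChain_range_succ]
    exact hadj
  refine ⟨(Walk.ofSupport _ hne hchain).copy (by simp) (by simp [List.getLast_range]),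
    ?_, ?_, ?_⟩
  · rw [Walk.isPath_copy, Walk.isPath_def, Walk.support_ofSupport]
    refine List.Nodup.map_on (fun x hx y hy hxy => hinj ?_ ?_ hxy) List.nodup_range
    · simpa [Nat.lt_succ_iff] using hx
    · simpa [Nat.lt_succ_iff] using hy
  · simp
  · intro m hm
    simpa [Walk.support_copy, Walk.support_ofSupport] using ⟨m, by omega, rfl⟩

/-- The boustrophedon through the strip `{0, …, n-1} × ℕ` (row, column), column by column:
column `c` is traversed from row `n-1` up to row `0` if `c` is even and back down if `c` is odd. -/
def stripSnake (n j : ℕ) : ℕ × ℕ :=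
  (if j / n % 2 = 0 then n - 1 - j % n else j % n, j / n)

namespace stripSnake

variable {n : ℕ}

theorem zero : stripSnake n 0 = (n - 1, 0) := by
  simp [stripSnake]

theorem lt_of_lt_mul {c j : ℕ} (h : j < n * c) :
    (stripSnake n j).1 < n ∧ (stripSnake n j).2 < c := by
  have hn := Nat.pos_of_lt_mul_right h
  have := Nat.mod_lt j hn
  refine ⟨?_, (Nat.div_lt_iff_lt_mul hn).2 (by rwa [Nat.mul_comm])⟩
  simp only [stripSnake]
  split_ifs <;> omega

theorem gridRel (hn : 0 < n) (j : ℕ) :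
    GridRel (stripSnake n j) (stripSnake n (j + 1)) ∨
      GridRel (stripSnake n (j + 1)) (stripSnake n j) := by
  have hj := Nat.div_add_mod j n
  have hr := Nat.mod_lt j hn
  have hstep : j % n + 1 < n ∧ (j + 1) / n = j / n ∧ (j + 1) % n = j % n + 1 ∨
      j % n + 1 = n ∧ (j + 1) / n = j / n + 1 ∧ (j + 1) % n = 0 := by
    rcases Nat.lt_or_ge (j % n + 1) n with h | h
    · exact .inl ⟨h, (Nat.div_mod_unique hn).2 ⟨by omega, h⟩⟩
    · exact .inr ⟨by omega, (Nat.div_mod_unique hn).2 ⟨by rw [Nat.mul_succ]; omega, hn⟩⟩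
  rcases hstep with ⟨h, hq, hr'⟩ | ⟨h, hq, hr'⟩ <;>
  · simp only [stripSnake, hq, hr', GridRel, true_and, and_true]
    generalize j / n = q at *
    generalize j % n = r at *
    split_ifs <;> omega

theorem injective (hn : 0 < n) : Function.Injective (stripSnake n) := by
  intro i j h
  obtain ⟨h₁, h₂⟩ := Prod.ext_iff.1 h
  have hi := Nat.div_add_mod i n
  have hj := Nat.div_add_mod j n
  have := Nat.mod_lt i hn
  have := Nat.mod_lt j hn
  simp only [stripSnake] at h₁ h₂
  rw [h₂] at h₁ hi
  generalize i % n = r at *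
  generalize j % n = s at *
  split_ifs at h₁ <;> omega

theorem apply_eq {a : ℕ} (ha : a < n) (b : ℕ) :
    stripSnake n (n * b + if b % 2 = 0 then n - 1 - a else a) = (a, b) := by
  have hr : (if b % 2 = 0 then n - 1 - a else a) < n := by split_ifs <;> omega
  obtain ⟨hq, hr⟩ := (Nat.div_mod_unique (d := b) (by omega)).2 ⟨Nat.add_comm _ _, hr⟩
  simp only [stripSnake, hq, hr, Prod.ext_iff, and_true]
  split_ifs <;> omega

theorem apply_mul_sub_one (hn : 0 < n) (c : ℕ) :
    stripSnake n (n * (2 * c + 2) - 1) = (n - 1, 2 * c + 1) := by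
  have h : n * (2 * c + 2) = n * (2 * c + 1) + n := by ring
  have := apply_eq (n := n) (a := n - 1) (by omega) (2 * c + 1)
  rwa [if_neg (by omega), show n * (2 * c + 1) + (n - 1) = n * (2 * c + 2) - 1 by omega] at this

end stripSnake

theorem gridGraph_adj_of_gridRel {a b : ℕ} {u v : Fin a × Fin b}
    (h : GridRel (u.1, u.2) (v.1, v.2) ∨ GridRel (v.1, v.2) (u.1, u.2)) :
    (gridGraph a b).Adj u v := by
  refine (fromRel_adj _ _ _).2 ⟨?_, h⟩
  rintro rfl
  simp only [GridRel] at h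
  omega

namespace spbGrid

theorem gridGraph_le (k : ℕ) : gridGraph (2 * k) (2 * k) ≤ spbGrid k :=
  fun _ _ h => (fromRel_adj _ _ _).2 (((fromRel_adj _ _ _).1 h).imp_right
    (Or.imp Or.inl Or.inl))

def rotate (k : ℕ) : spbGrid k →g spbGrid k where
  toFun x := (x.1.rev, x.2.rev)
  map_rel' {x y} h := by
    have := x.1.isLt
    have := x.2.isLt
    have := y.1.isLt
    have := y.2.isLt
    simp only [spbGrid, fromRel_adj, GridRel, ne_eq, Prod.ext_iff, Fin.rev_inj, Fin.val_rev]
      at h ⊢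
    refine ⟨h.1, ?_⟩
    -- rotating maps each kind of edge from `x` to `y` to the same kind from `y` to `x`
    rcases h.2 with ((h | h) | h) | ((h | h) | h)
    · exact .inr (.inl (.inl (by omega)))
    · exact .inr (.inl (.inr (by omega)))
    · exact .inr (.inr (by omega))
    · exact .inl (.inl (.inl (by omega)))
    · exact .inl (.inl (.inr (by omega)))
    · exact .inl (.inr (by omega))

theorem rotate_involutive (k : ℕ) : Function.Involutive (rotate k) := fun x => by
  simp [rotate]

/-- The positions along an odd cycle of `S_{n+1}` through all of rows `0, …, n`, from `(n, n)`
(at `m = 0`) to `(n + 1, n + 1)` (at `m = 2 (n+1)²`): along row `n` down to column `0`,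
through rows `< n` by `stripSnake`, then along row `n` from column `2n+1` down to `n+1`. -/
def topPath (n m : ℕ) : ℕ × ℕ :=
  if m ≤ n then (n, n - m)
  else if m ≤ n + n * (2 * n + 2) then stripSnake n (m - (n + 1))
  else if m < 2 * (n + 1) ^ 2 then (n, 2 * (n + 1) ^ 2 + n - m)
  else (n + 1, n + 1)

namespace topPath

variable {n : ℕ}

theorem two_mul_succ_sq (n : ℕ) : 2 * (n + 1) ^ 2 = n + n * (2 * n + 2) + n + 2 := by ring

theorem eq_of_le {m : ℕ} (h : m ≤ n) : topPath n m = (n, n - m) := if_pos h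

theorem eq_stripSnake {j : ℕ} (h : j < n * (2 * n + 2)) :
    topPath n (n + 1 + j) = stripSnake n j := by
  rw [topPath, if_neg (by omega), if_pos (by omega), Nat.add_sub_cancel_left]

theorem eq_of_lt {m : ℕ} (h₁ : n + n * (2 * n + 2) < m) (h₂ : m < 2 * (n + 1) ^ 2) :
    topPath n m = (n, 2 * (n + 1) ^ 2 + n - m) := by
  rw [topPath, if_neg (by omega), if_neg (by omega), if_pos h₂]

theorem zero : topPath n 0 = (n, n) := eq_of_le (Nat.zero_le n)

theorem last : topPath n (2 * (n + 1) ^ 2) = (n + 1, n + 1) := by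
  have := two_mul_succ_sq n
  rw [topPath, if_neg (by omega), if_neg (by omega), if_neg (lt_irrefl _)]

theorem lt_two_mul (n m : ℕ) :
    (topPath n m).1 < 2 * (n + 1) ∧ (topPath n m).2 < 2 * (n + 1) := by
  have := two_mul_succ_sq n
  rcases le_or_gt m n with h₁ | h₁
  · rw [eq_of_le h₁]
    omega
  rcases le_or_gt m (n + n * (2 * n + 2)) with h₂ | h₂
  · obtain ⟨j, rfl⟩ : ∃ j, m = n + 1 + j := ⟨m - (n + 1), by omega⟩
    have := stripSnake.lt_of_lt_mul (n := n) (c := 2 * n + 2) (j := j) (by omega)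
    rw [eq_stripSnake (by omega)]
    omega
  rcases lt_or_ge m (2 * (n + 1) ^ 2) with h₃ | h₃
  · rw [eq_of_lt h₂ h₃]
    omega
  · rw [topPath, if_neg (by omega), if_neg (by omega), if_neg (by omega)]
    omega

theorem gridRel_succ {m : ℕ} (hm : m < 2 * (n + 1) ^ 2) :
    GridRel (topPath n m) (topPath n (m + 1)) ∨ GridRel (topPath n (m + 1)) (topPath n m) := by
  have hN := two_mul_succ_sq n
  rcases Nat.eq_zero_or_pos n with rfl | hn
  · interval_cases m <;> simp [topPath, GridRel]
  have hs : n ≤ n * (2 * n + 2) := Nat.le_mul_of_pos_right n (by omega)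
  rcases lt_trichotomy m n with h₁ | rfl | h₁
  · rw [eq_of_le h₁.le, eq_of_le (m := m + 1) h₁]
    dsimp only [GridRel]
    omega
  · rw [eq_of_le le_rfl, eq_stripSnake (j := 0) (by omega), stripSnake.zero]
    dsimp only [GridRel]
    omega
  rcases lt_trichotomy m (n + n * (2 * n + 2)) with h₂ | rfl | h₂
  · obtain ⟨j, rfl⟩ : ∃ j, m = n + 1 + j := ⟨m - (n + 1), by omega⟩
    rw [add_assoc (n + 1) j 1, eq_stripSnake (by omega), eq_stripSnake (by omega)]
    exact stripSnake.gridRel hn j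
  · rw [show n + n * (2 * n + 2) = n + 1 + (n * (2 * n + 2) - 1) by omega,
      eq_stripSnake (by omega), stripSnake.apply_mul_sub_one hn n, eq_of_lt (by omega) (by omega)]
    dsimp only [GridRel]
    omega
  rcases lt_or_ge (m + 1) (2 * (n + 1) ^ 2) with h₃ | h₃
  · rw [eq_of_lt h₂ (by omega), eq_of_lt (by omega) h₃]
    dsimp only [GridRel]
    omega
  · rw [show m + 1 = 2 * (n + 1) ^ 2 by omega, eq_of_lt h₂ hm, last]
    dsimp only [GridRel]
    omega

/-- The four pieces of the path lie in row `n` left of column `n+1`, in the rows `< n`, in row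
`n` right of column `n`, and in row `n+1`. -/
theorem injOn : Set.InjOn (topPath n) (Set.Iic (2 * (n + 1) ^ 2)) := by
  intro m hm m' hm' h
  simp only [Set.mem_Iic] at hm hm'
  have hN := two_mul_succ_sq n
  have key : ∀ j, j < n * (2 * n + 2) → (stripSnake n j).1 < n :=
    fun j hj => (stripSnake.lt_of_lt_mul hj).1
  simp only [topPath] at h
  split_ifs at h <;> simp only [Prod.ext_iff] at h
  all_goals first
    | omega
    | (have := key (m - (n + 1)) (by omega); omega)
    | (have := key (m' - (n + 1)) (by omega); omega)
    | (have hn : 0 < n := Nat.pos_of_lt_mul_right (a := m - (n + 1)) (c := 2 * n + 2) (by omega)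
       have := stripSnake.injective hn (Prod.ext h.1 h.2)
       omega)

theorem exists_eq {a b : ℕ} (ha : a ≤ n) (hb : b < 2 * (n + 1)) :
    ∃ m ≤ 2 * (n + 1) ^ 2, topPath n m = (a, b) := by
  have hN := two_mul_succ_sq n
  rcases lt_or_eq_of_le ha with ha | rfl
  · have hj : (n * b + if b % 2 = 0 then n - 1 - a else a) < n * (2 * n + 2) := by
      have : n * b + (if b % 2 = 0 then n - 1 - a else a) < n * (b + 1) := by
        rw [Nat.mul_succ]
        split_ifs <;> omega
      exact this.trans_le (Nat.mul_le_mul_left _ (by omega))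
    exact ⟨n + 1 + (n * b + if b % 2 = 0 then n - 1 - a else a), by omega,
      by rw [eq_stripSnake hj, stripSnake.apply_eq ha]⟩
  rcases le_or_gt b a with hb' | hb'
  · exact ⟨a - b, by omega, by rw [eq_of_le (by omega), Nat.sub_sub_self hb']⟩
  · refine ⟨2 * (a + 1) ^ 2 + a - b, by omega, ?_⟩
    rw [eq_of_lt (by omega) (by omega), Prod.mk.injEq]
    omega

end topPath

variable (n : ℕ)

def diagLo : Fin (2 * (n + 1)) × Fin (2 * (n + 1)) := (⟨n, by omega⟩, ⟨n, by omega⟩)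

def diagHi : Fin (2 * (n + 1)) × Fin (2 * (n + 1)) :=
  (⟨n + 1, by omega⟩, ⟨n + 1, by omega⟩)

theorem adj_diagHi_diagLo : (spbGrid (n + 1)).Adj (diagHi n) (diagLo n) :=
  (fromRel_adj _ _ _).2
    ⟨by simp [diagHi, diagLo], .inr (.inr (by simp [diagHi, diagLo]))⟩

theorem not_gridGraph_adj_diagHi_diagLo :
    ¬ (gridGraph (2 * (n + 1)) (2 * (n + 1))).Adj (diagHi n) (diagLo n) := by
  simp [gridGraph, diagHi, diagLo, GridRel]

def topVertex (m : ℕ) : Fin (2 * (n + 1)) × Fin (2 * (n + 1)) :=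
  (⟨_, (topPath.lt_two_mul n m).1⟩, ⟨_, (topPath.lt_two_mul n m).2⟩)

theorem exists_isPath_top :
    ∃ p : (gridGraph (2 * (n + 1)) (2 * (n + 1))).Walk (diagLo n) (diagHi n),
      p.IsPath ∧ Even p.length ∧ ∀ v, v.1.val ≤ n → v ∈ p.support := by
  have h₀ : topVertex n 0 = diagLo n := by simp [topVertex, diagLo, topPath.zero]
  have h₁ : topVertex n (2 * (n + 1) ^ 2) = diagHi n := by
    simp [topVertex, diagHi, topPath.last]
  obtain ⟨p, hp, hlen, hmem⟩ := exists_isPath_of_injOn (G := gridGraph _ _) (topVertex n)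
    (2 * (n + 1) ^ 2) (fun m hm => gridGraph_adj_of_gridRel (topPath.gridRel_succ hm))
    (fun m hm m' hm' h => topPath.injOn hm hm' (by
      simpa [topVertex, Prod.ext_iff, Fin.ext_iff] using h))
  refine ⟨p.copy h₀ h₁, (Walk.isPath_copy _ _ _).2 hp, by simp [hlen], fun v hv => ?_⟩
  obtain ⟨m, hm, hmv⟩ := topPath.exists_eq hv v.2.isLt
  rw [Walk.support_copy]
  convert hmem m hm
  ext <;> simp [topVertex, hmv]

theorem exists_odd_cycle_top : ∃ C : (spbGrid (n + 1)).Walk (diagHi n) (diagHi n),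
    C.IsCycle ∧ Odd C.length ∧ diagLo n ∈ C.support ∧
      ∀ v, v.1.val ≤ n → v ∈ C.support := by
  obtain ⟨p, hp, heven, hcover⟩ := exists_isPath_top n
  have hedges : ∀ e ∈ p.edges, e ∈ (spbGrid (n + 1)).edgeSet :=
    fun e he => edgeSet_mono (gridGraph_le _) (p.edges_subset_edgeSet he)
  refine ⟨.cons (adj_diagHi_diagLo n) (p.transfer _ hedges), ?_, ?_, ?_, ?_⟩
  · rw [Walk.cons_isCycle_iff, Walk.edges_transfer]
    exact ⟨hp.transfer hedges, fun h =>
      not_gridGraph_adj_diagHi_diagLo n (p.edges_subset_edgeSet h)⟩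
  · simpa [Walk.length_transfer] using heven.add_one
  · simp [Walk.support_transfer]
  · intro v hv
    simpa [Walk.support_transfer] using .inr (hcover v hv)

theorem exists_odd_cycles_cover : ∃ (u v : Fin (2 * (n + 1)) × Fin (2 * (n + 1)))
    (C : (spbGrid (n + 1)).Walk u u) (C' : (spbGrid (n + 1)).Walk v v),
    C.IsCycle ∧ C'.IsCycle ∧ Odd C.length ∧ Odd C'.length ∧
      diagLo n ∈ C.support ∧ diagHi n ∈ C.support ∧
      ∀ x, x ∈ C.support ∨ x ∈ C'.support := by
  obtain ⟨C, hC, hodd, hlower, hcover⟩ := exists_odd_cycle_top n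
  refine ⟨_, _, C, C.map (rotate _), hC,
    (Walk.isCycle_map_iff_of_injective (rotate_involutive _).injective).2 hC, hodd,
    by simpa using hodd, hlower, C.start_mem_support, fun x => ?_⟩
  by_cases hx : x.1.val ≤ n
  · exact .inl (hcover x hx)
  · rw [Walk.support_map]
    refine .inr (List.mem_map.2 ⟨rotate _ x, hcover _ ?_, rotate_involutive _ x⟩)
    simp [rotate]
    omega

end spbGrid

/-- For every integer `k ≥ 1`, the `B`-blind-treewidth of the singly
parity-breaking grid `S_k` equals `tw(S_k) + 1`. -/
theorem blindTwB_spbGrid (k : ℕ) (hk : 1 ≤ k) :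
    blindTwB (spbGrid k) = treewidth (spbGrid k) + 1 := by
  obtain ⟨n, rfl⟩ : ∃ n, k = n + 1 := ⟨k - 1, by omega⟩
  obtain ⟨u, v, C, C', hC, hC', hodd, hodd', hlower, hupper, hcover⟩ :=
    spbGrid.exists_odd_cycles_cover n
  have hadj := spbGrid.adj_diagHi_diagLo n
  exact blindTreewidth_eq_treewidth_add_one fun D => D.blindWidth_eq_width_add_one
    (fun X hX => hX.ncard_le_two hC hC' hodd hodd' hcover) hadj
    fun X hX₁ hX₂ hX => hadj.ne (hX C hC hodd ⟨hX₁, hupper⟩ ⟨hX₂, hlower⟩)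
end
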